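/- Let f ∈ WRPB with W_f(ω) = ε √(p*)^{m+s} ζ_p^{f*(ω)} for all ω ∈ S_f. Then there exists a positive even integer l with gcd(l−1, p−1) = 1 such that f*(aω) = a^l f*(ω) for every a ∈ F_p^* and ω ∈ S_f. -/

import Mathlib

open scoped BigOperators Classical

noncomputable section

/-- The primitive `p`-th root of unity `ζ_p = exp(2πi/p)` in `ℂ`. -/
def zetaC (p : ℕ) : ℂ := Complex.exp (2 * Real.pi * Complex.I / p)

/-- The additive character `a ↦ ζ_p^a` of `ZMod p` with values in `ℂ`. -/
def chi (p : ℕ) (a : ZMod p) : ℂ := zetaC p ^ a.val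

/-- The principal square root of `p* = η₀(-1)·p`:  `√p` if `p ≡ 1 (mod 4)`,
and `i·√p` if `p ≡ 3 (mod 4)`. -/
def sqrtPstar (p : ℕ) : ℂ :=
  if p % 4 = 1 then (Real.sqrt p : ℂ) else Complex.I * (Real.sqrt p : ℂ)

/-- The Walsh transform `W_f(ω) = ∑_x ζ_p^{f(x) - Tr(ωx)}` of `f : F → ZMod p`,
where `F` is a finite field of characteristic `p` and `Tr` is the trace to `ZMod p`. -/
def walsh (p : ℕ) {F : Type} [Field F] [Fintype F] [Algebra (ZMod p) F]
    (f : F → ZMod p) (ω : F) : ℂ :=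
  ∑ x : F, chi p (f x - Algebra.trace (ZMod p) F (ω * x))

/-- `f` is a weakly regular `s`-plateaued *balanced* function in the class WRPB:
balanced, `f(0)=0`, homogeneous of even degree `t` with `gcd(t-1,p-1)=1`,
and weakly regular with sign `ε` and dual function `fstar` on the Walsh support. -/
structure IsWRPB (p m s : ℕ) {F : Type} [Field F] [Fintype F] [Algebra (ZMod p) F]
    (f : F → ZMod p) (ε : ℤ) (fstar : F → ZMod p) : Prop where
  card_eq : Fintype.card F = p ^ m
  plateaued : ∀ ω : F, ‖walsh p f ω‖ ^ 2 = 0 ∨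
      ‖walsh p f ω‖ ^ 2 = (p : ℝ) ^ (m + s)
  balanced : walsh p f 0 = 0
  map_zero : f 0 = 0
  homog : ∃ t : ℕ, Even t ∧ 0 < t ∧ Nat.gcd (t - 1) (p - 1) = 1 ∧
      ∀ a : ZMod p, a ≠ 0 → ∀ x : F, f (algebraMap (ZMod p) F a * x) = a ^ t * f x
  sign : ε = 1 ∨ ε = -1
  weakly_regular : ∀ ω : F, ‖walsh p f ω‖ ^ 2 = (p : ℝ) ^ (m + s) →
      walsh p f ω = (ε : ℂ) * sqrtPstar p ^ (m + s) * chi p (fstar ω)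
  fstar_eq_zero : ∀ ω : F, ‖walsh p f ω‖ ^ 2 ≠ (p : ℝ) ^ (m + s) → fstar ω = 0

/-!
Let `t` be the degree of homogeneity of `f` and choose an even `l` with
`(l - 1)(t - 1) ≡ 1 (mod p - 1)`, so that `a^((l-1)t) = a^l` on `F_p^*`. Substituting
`x ↦ a^(l-1) x` shows that `W_f(aω) = ∑ ζ_p^(a^l (f(x) - Tr(ωx)))` is the image of `W_f(ω)`
under the Galois automorphism `ζ_p ↦ ζ_p^(a^l)` of `ℚ(ζ_p)`. As `a^l` is a square, this
automorphism fixes `ε √(p*)^(m+s)`, whose square is rational, so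
`W_f(aω) = ε √(p*)^(m+s) ζ_p^(a^l f*(ω))`.
-/
lemma exists_odd_mul_modEq_one {k n : ℕ} (hk : Odd k) (hkn : k.Coprime n) (hn : 0 < n) :
    ∃ r, Odd r ∧ r * k ≡ 1 [MOD n] := by
  -- inverting `k` modulo `2n` rather than `n` forces the inverse to be odd
  obtain ⟨r, -, hr⟩ := Nat.exists_mul_mod_eq_one_of_coprime
    (hk.coprime_two_right.mul_right hkn) (by omega : 1 < 2 * n)
  have hr' : r * k ≡ 1 [MOD 2 * n] := by
    rw [Nat.ModEq, mul_comm r k, hr, Nat.mod_eq_of_lt (by omega)]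
  refine ⟨r, ?_, hr'.of_mul_left 2⟩
  have hodd : Odd (r * k) := Nat.odd_iff.mpr (by simpa [Nat.ModEq] using hr'.of_mul_right n)
  exact (Nat.odd_mul.mp hodd).1

lemma ZMod.exists_even_pow_mul_eq_pow {p : ℕ} [Fact p.Prime] {t : ℕ} (ht : Even t) (ht0 : 0 < t)
    (htp : (t - 1).Coprime (p - 1)) :
    ∃ l, Even l ∧ 0 < l ∧ (l - 1).Coprime (p - 1) ∧
      ∀ x : ZMod p, x ≠ 0 → x ^ ((l - 1) * t) = x ^ l := by
  have hp := (Fact.out : p.Prime).two_le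
  obtain ⟨r, hr, hrt⟩ := exists_odd_mul_modEq_one (Nat.Even.sub_odd ht0 ht odd_one) htp
    (by omega)
  refine ⟨r + 1, hr.add_one, r.succ_pos, ?_, fun x hx => ?_⟩
  · simpa using Nat.coprime_of_mul_modEq_one _ hrt
  have hexp : r * t ≡ r + 1 [MOD p - 1] := by
    obtain ⟨t', rfl⟩ : ∃ t', t = t' + 1 := ⟨t - 1, by omega⟩
    simpa [mul_add, add_comm] using hrt.add_right r
  have hx1 := ZMod.pow_card_sub_one_eq_one hx
  rw [Nat.add_sub_cancel, pow_eq_pow_mod _ hx1, (hexp : r * t % (p - 1) = _),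
    ← pow_eq_pow_mod _ hx1]

theorem RingHom.apply_apply_eq_self_of_map_sq_eq {R : Type*} [CommRing R] [IsDomain R]
    (σ : R →+* R) {y : R} (hy : σ (y ^ 2) = y ^ 2) : σ (σ y) = y := by
  rw [map_pow, sq_eq_sq_iff_eq_or_eq_neg] at hy
  rcases hy with hy | hy <;> simp [hy]

section Cyclotomic

open Polynomial

variable {p : ℕ} [Fact p.Prime]

instance : Fact (Irreducible (cyclotomic p ℚ)) :=
  ⟨cyclotomic.irreducible_rat (Fact.out : p.Prime).pos⟩

/-- The embedding of `ℚ(ζ_p) = ℚ[X] / Φ_p` sending `X` to the primitive root `z`. -/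
def cyclotomicLift {L : Type*} [CommRing L] [IsDomain L] [Algebra ℚ L] {z : L}
    (hz : IsPrimitiveRoot z p) : AdjoinRoot (cyclotomic p ℚ) →+* L :=
  AdjoinRoot.lift (algebraMap ℚ L) z <| by
    rw [eval₂_eq_eval_map, map_cyclotomic]
    exact hz.isRoot_cyclotomic (Fact.out : p.Prime).pos

@[simp]
lemma cyclotomicLift_root {L : Type*} [CommRing L] [IsDomain L] [Algebra ℚ L] {z : L}
    (hz : IsPrimitiveRoot z p) : cyclotomicLift hz (AdjoinRoot.root _) = z :=
  AdjoinRoot.lift_root _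

lemma isPrimitiveRoot_root_cyclotomic :
    IsPrimitiveRoot (AdjoinRoot.root (cyclotomic p ℚ)) p := by
  rw [← isRoot_cyclotomic_iff, ← map_cyclotomic p (AdjoinRoot.of (cyclotomic p ℚ))]
  exact AdjoinRoot.isRoot_root _

lemma isPrimitiveRoot_zetaC : IsPrimitiveRoot (zetaC p) p :=
  Complex.isPrimitiveRoot_exp p (Fact.out : p.Prime).ne_zero

lemma chi_natCast (n : ℕ) : chi p n = zetaC p ^ n := by
  rw [chi, ZMod.val_natCast, ← pow_eq_pow_mod _ isPrimitiveRoot_zetaC.pow_eq_one]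

lemma chi_add (a b : ZMod p) : chi p (a + b) = chi p a * chi p b := by
  rw [← ZMod.natCast_zmod_val a, ← ZMod.natCast_zmod_val b, ← Nat.cast_add, chi_natCast,
    chi_natCast, chi_natCast, pow_add]

lemma chi_injective : Function.Injective (chi p) := fun a b hab =>
  ZMod.val_injective p (isPrimitiveRoot_zetaC.pow_inj (ZMod.val_lt a) (ZMod.val_lt b) hab)

lemma norm_chi (a : ZMod p) : ‖chi p a‖ = 1 := by
  rw [chi, norm_pow, isPrimitiveRoot_zetaC.norm'_eq_one (Fact.out : p.Prime).ne_zero, one_pow]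

/-- With `σ_b : ζ_p ↦ ζ_p^b`, the hypothesis puts `z` in `ℚ(ζ_p)`, and `z² ∈ ℚ` forces
`σ_b z = ± z`, so `σ_{b²} = σ_b ∘ σ_b` fixes `z`. -/
theorem sum_chi_sq_mul_eq {ι : Type*} [Fintype ι] {u : ι → ZMod p} {v : ZMod p} {z : ℂ}
    (hz : ∃ q : ℚ, z ^ 2 = q) (h : ∑ i, chi p (u i) = z * chi p v) {b : ZMod p}
    (hb : b ≠ 0) : ∑ i, chi p (b ^ 2 * u i) = z * chi p (b ^ 2 * v) := by
  obtain ⟨q, hq⟩ := hz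
  set r := AdjoinRoot.root (cyclotomic p ℚ)
  set φ := cyclotomicLift (isPrimitiveRoot_zetaC (p := p))
  set σ := cyclotomicLift (isPrimitiveRoot_root_cyclotomic.pow_of_coprime b.val
    (ZMod.val_coe_unit_coprime (Units.mk0 b hb)))
  have hφ (a : ZMod p) : φ (r ^ a.val) = chi p a := by rw [map_pow, cyclotomicLift_root]; rfl
  have hφσσ (a : ZMod p) : φ (σ (σ (r ^ a.val))) = chi p (b ^ 2 * a) := by
    simp only [σ, φ, r, map_pow, cyclotomicLift_root, ← pow_mul]
    rw [← chi_natCast]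
    push_cast [ZMod.natCast_zmod_val]
    ring_nf
  set S := ∑ i, r ^ (u i).val
  set Y := S * r ^ (-v).val
  have hφY : φ Y = z := by
    simp only [Y, S, map_mul, map_sum, hφ]
    rw [h, mul_assoc, ← chi_add, add_neg_cancel, chi, ZMod.val_zero, pow_zero, mul_one]
  have hS : S = Y * r ^ v.val := φ.injective <| by
    rw [map_mul, hφY, hφ, map_sum]
    simpa only [hφ] using h
  have hY : Y ^ 2 = q := φ.injective (by rw [map_pow, hφY, map_ratCast, hq])
  have hσσY : σ (σ Y) = Y := σ.apply_apply_eq_self_of_map_sq_eq (by rw [hY, map_ratCast])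
  calc ∑ i, chi p (b ^ 2 * u i) = φ (σ (σ S)) := by simp only [S, map_sum, hφσσ]
    _ = z * chi p (b ^ 2 * v) := by rw [hS, map_mul, map_mul, map_mul, hσσY, hφY, hφσσ]

end Cyclotomic

lemma exists_sqrtPstar_sq_eq_ratCast (p : ℕ) : ∃ q : ℚ, sqrtPstar p ^ 2 = q := by
  unfold sqrtPstar
  split_ifs
  · exact ⟨p, by rw [← Complex.ofReal_pow, Real.sq_sqrt p.cast_nonneg]; simp⟩
  · refine ⟨-p, ?_⟩
    rw [mul_pow, Complex.I_sq, ← Complex.ofReal_pow, Real.sq_sqrt p.cast_nonneg]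
    simp

lemma norm_sqrtPstar_sq (p : ℕ) : ‖sqrtPstar p‖ ^ 2 = p := by
  unfold sqrtPstar
  split_ifs <;>
    simp only [norm_mul, Complex.norm_I, one_mul, Complex.norm_real, Real.norm_eq_abs,
      sq_abs, Real.sq_sqrt p.cast_nonneg]

section Walsh

variable {p : ℕ} [Fact p.Prime] {F : Type} [Field F] [Fintype F] [Algebra (ZMod p) F]

lemma walsh_algebraMap_mul {f : F → ZMod p} {a d : ZMod p} (hd : d ≠ 0)
    (hf : ∀ x, f (algebraMap (ZMod p) F d * x) = a * d * f x) (ω : F) :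
    walsh p f (algebraMap (ZMod p) F a * ω) =
      ∑ x, chi p (a * d * (f x - Algebra.trace (ZMod p) F (ω * x))) := by
  have hd' : algebraMap (ZMod p) F d ≠ 0 := (map_ne_zero _).mpr hd
  rw [walsh, ← Equiv.sum_comp (Equiv.mulLeft₀ _ hd')]
  refine Finset.sum_congr rfl fun x _ => ?_
  have hx : algebraMap (ZMod p) F a * ω * (algebraMap (ZMod p) F d * x) =
      algebraMap (ZMod p) F (a * d) * (ω * x) := by
    rw [map_mul]; ring
  rw [Equiv.mulLeft₀_apply, hf, hx, ← Algebra.smul_def, map_smul, smul_eq_mul, mul_sub]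

lemma IsWRPB.fstar_eq_of_walsh_eq {m s : ℕ} {f fstar : F → ZMod p} {ε : ℤ}
    (hf : IsWRPB p m s f ε fstar) {ω : F} {v : ZMod p}
    (h : walsh p f ω = (ε : ℂ) * sqrtPstar p ^ (m + s) * chi p v) : fstar ω = v := by
  have hε : ‖(ε : ℂ)‖ = 1 := by rcases hf.sign with rfl | rfl <;> simp
  have hnorm : ‖walsh p f ω‖ ^ 2 = (p : ℝ) ^ (m + s) := by
    rw [h, norm_mul, norm_mul, hε, norm_chi, norm_pow, one_mul, mul_one, ← pow_mul, mul_comm,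
      pow_mul, norm_sqrtPstar_sq]
  have hz : (ε : ℂ) * sqrtPstar p ^ (m + s) ≠ 0 := by
    refine mul_ne_zero (norm_ne_zero_iff.mp (by rw [hε]; exact one_ne_zero)) (pow_ne_zero _ ?_)
    rw [← norm_ne_zero_iff, ← sq_eq_zero_iff.ne, norm_sqrtPstar_sq]
    exact_mod_cast (Fact.out : p.Prime).ne_zero
  rw [hf.weakly_regular ω hnorm] at h
  exact chi_injective (mul_left_cancel₀ hz h)

end Walsh

theorem stmt2_general (p m s : ℕ) [Fact p.Prime]
    (F : Type) [Field F] [Fintype F] [Algebra (ZMod p) F]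
    (f : F → ZMod p) (ε : ℤ) (fstar : F → ZMod p)
    (hf : IsWRPB p m s f ε fstar) :
    ∃ l : ℕ, Even l ∧ 0 < l ∧ Nat.gcd (l - 1) (p - 1) = 1 ∧
      ∀ a : ZMod p, a ≠ 0 → ∀ ω : F,
        ‖walsh p f ω‖ ^ 2 = (p : ℝ) ^ (m + s) →
        fstar (algebraMap (ZMod p) F a * ω) = a ^ l * fstar ω := by
  obtain ⟨t, ht, ht0, htp, hft⟩ := hf.homog
  obtain ⟨l, ⟨w, rfl⟩, hl0, hlp, hpow⟩ := ZMod.exists_even_pow_mul_eq_pow ht ht0 htp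
  refine ⟨w + w, ⟨w, rfl⟩, hl0, hlp, fun a ha ω hω => hf.fstar_eq_of_walsh_eq ?_⟩
  have hl : a * a ^ (w + w - 1) = a ^ (w + w) := by rw [← pow_succ', Nat.sub_add_cancel hl0]
  have hscale (x : F) : f (algebraMap (ZMod p) F (a ^ (w + w - 1)) * x) =
      a * a ^ (w + w - 1) * f x := by
    rw [hft _ (pow_ne_zero _ ha), ← pow_mul, hpow a ha, hl]
  obtain ⟨q, hq⟩ := exists_sqrtPstar_sq_eq_ratCast p
  have hz : ((ε : ℂ) * sqrtPstar p ^ (m + s)) ^ 2 = ((ε ^ 2 * q ^ (m + s) : ℚ) : ℂ) := by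
    push_cast
    rw [mul_pow, ← pow_mul, mul_comm _ 2, pow_mul, hq]
  rw [walsh_algebraMap_mul (pow_ne_zero _ ha) hscale, hl, ← mul_two, pow_mul]
  exact sum_chi_sq_mul_eq ⟨_, hz⟩ (hf.weakly_regular ω hω) (pow_ne_zero w ha)

/-- For `f ∈ WRPB`, the dual function `f*` is also homogeneous: there is a positive even
integer `l` with `gcd(l-1, p-1) = 1` such that `f*(aω) = a^l f*(ω)` for all nonzero
`a ∈ F_p` and all `ω` in the Walsh support. -/
theorem stmt2 (p m s : ℕ) [Fact p.Prime] (hodd : Odd p) (hm : 0 < m)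
    (F : Type) [Field F] [Fintype F] [Algebra (ZMod p) F]
    (f : F → ZMod p) (ε : ℤ) (fstar : F → ZMod p)
    (hf : IsWRPB p m s f ε fstar) :
    ∃ l : ℕ, Even l ∧ 0 < l ∧ Nat.gcd (l - 1) (p - 1) = 1 ∧
      ∀ a : ZMod p, a ≠ 0 → ∀ ω : F,
        ‖walsh p f ω‖ ^ 2 = (p : ℝ) ^ (m + s) →
        fstar (algebraMap (ZMod p) F a * ω) = a ^ l * fstar ω :=
  stmt2_general p m s F f ε fstar hf
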